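/- Let $X=\bigcup_{Q\in\mathcal{Q}} Q$ be a finite disjoint union of measurable sets and let $(g_T)_{T\in\mathbb{T}}$ be a finite family of functions in $L^2(X)$. For each $T$ let $Y(T)\subset X$ be a union of at most $N$ of the sets $Q$, and suppose: (a) for each $Q$, $\int_Q |\sum_{T: Q\subset Y(T)} g_T|^2 \le A \sum_{T: Q\subset Y(T)} \|h_T\|^2$ for some Hilbert-space vectors $h_T$ with local $L^2$-bound constant $A$; and (b) the $h_T$ are pairwise orthogonal with $\sum_T\|h_T\|^2=\|h\|^2$. Then $\int_X |\sum_T g_T\mathbf{1}_{Y(T)}|^2 \le A\,N\,\|h\|^2$. -/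
import Mathlib


open MeasureTheory
open scoped RealInnerProductSpace

/-- abstract form of Lemma 2.15, `L²` estimate with shadings:
if `X = ⊔ Q` is a disjoint union, each shading `Y(T) = ⋃_{q ∈ sel T} Q q` consists
of at most `N` pieces, the local `L²` bound (a) holds on each `Q` with constant `A`,
and the `h_T` are pairwise orthogonal with `∑‖h_T‖² = ‖h‖²`, then
`∫_X |∑_T g_T 1_{Y(T)}|² ≤ A N ‖h‖²`. -/
theorem stmt9 {α : Type*} [MeasurableSpace α] (μ : Measure α)
    {H : Type*} [NormedAddCommGroup H] [InnerProductSpace ℝ H]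
    {ιQ ιT : Type} [Fintype ιQ] [Fintype ιT] [DecidableEq ιQ]
    (Q : ιQ → Set α) (hQmeas : ∀ q, MeasurableSet (Q q))
    (hQdisj : Pairwise (Function.onFun Disjoint Q))
    (g : ιT → α → ℝ) (h : ιT → H) (hvec : H)
    (sel : ιT → Finset ιQ) (N : ℕ) (hsel : ∀ t, (sel t).card ≤ N)
    (A : ℝ) (hA : 0 ≤ A)
    (hlocal : ∀ q : ιQ,
      ∫ x in Q q, (∑ t ∈ Finset.univ.filter (fun t => q ∈ sel t), g t x)^2 ∂μ
        ≤ A * ∑ t ∈ Finset.univ.filter (fun t => q ∈ sel t), ‖h t‖^2)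
    (horth : ∀ t t', t ≠ t' → ⟪h t, h t'⟫ = 0)
    (hsum : ∑ t, ‖h t‖^2 = ‖hvec‖^2) :
    ∫ x in ⋃ q, Q q, (∑ t, Set.indicator (⋃ q ∈ sel t, Q q) (g t) x)^2 ∂μ
      ≤ A * N * ‖hvec‖^2 := by
  have hRHS : 0 ≤ A * N * ‖hvec‖^2 := by positivity
  set F : α → ℝ := fun x => (∑ t, Set.indicator (⋃ q ∈ sel t, Q q) (g t) x)^2 with hF
  by_cases hint : IntegrableOn F (⋃ q, Q q) μ
  · rw [MeasureTheory.integral_iUnion hQmeas hQdisj hint, tsum_fintype]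
    -- on each Q q the integrand equals the filtered sum squared
    have key : ∀ q : ιQ, ∫ x in Q q, F x ∂μ
        = ∫ x in Q q, (∑ t ∈ Finset.univ.filter (fun t => q ∈ sel t), g t x)^2 ∂μ := by
      intro q
      refine setIntegral_congr_fun (hQmeas q) (fun x hx => ?_)
      have : ∀ t : ιT, Set.indicator (⋃ q' ∈ sel t, Q q') (g t) x
          = if q ∈ sel t then g t x else 0 := by
        intro t
        by_cases hq : q ∈ sel t
        · simp only [hq, if_true]
          exact Set.indicator_of_mem (Set.mem_biUnion hq hx) _
        · simp only [hq, if_false]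
          refine Set.indicator_of_notMem ?_ _
          intro hmem
          obtain ⟨q', hq', hx'⟩ := Set.mem_iUnion₂.mp hmem
          have hne : q' ≠ q := fun e => hq (e ▸ hq')
          exact (hQdisj hne).le_bot ⟨hx', hx⟩
      simp only [hF, this, Finset.sum_ite_mem, Finset.sum_filter]
    calc ∑ q, ∫ x in Q q, F x ∂μ
        ≤ ∑ q, A * ∑ t ∈ Finset.univ.filter (fun t => q ∈ sel t), ‖h t‖^2 := by
          refine Finset.sum_le_sum fun q _ => ?_
          rw [key q]; exact hlocal q
      _ = A * ∑ q, ∑ t ∈ Finset.univ.filter (fun t => q ∈ sel t), ‖h t‖^2 := by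
          rw [Finset.mul_sum]
      _ = A * ∑ t, ((sel t).card : ℝ) * ‖h t‖^2 := by
          congr 1
          simp_rw [Finset.sum_filter]
          rw [Finset.sum_comm]
          refine Finset.sum_congr rfl fun t _ => ?_
          rw [Finset.sum_ite_mem, Finset.univ_inter, Finset.sum_const, nsmul_eq_mul]
      _ ≤ A * ∑ t, (N : ℝ) * ‖h t‖^2 := by
          refine mul_le_mul_of_nonneg_left (Finset.sum_le_sum fun t _ => ?_) hA
          have := hsel t
          have : ((sel t).card : ℝ) ≤ N := by exact_mod_cast this
          nlinarith [sq_nonneg ‖h t‖]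
      _ = A * N * ‖hvec‖^2 := by
          rw [← Finset.mul_sum, hsum, mul_assoc]
  · rw [MeasureTheory.integral_undef hint]
    exact hRHS
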